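/- arXiv:2106.02176 — 2 statements merged into one kernel-verified Lean document; each statement's English description precedes it below -/
import Mathlib

section
/- (Theorem 1: nonlinear tensegrity dynamics.) Let n : ℝ → (Fin n_n → EuclideanSpace ℝ (Fin 3)) be a twice-differentiable trajectory of nodal configurations with l i (n t) ≠ 0 for every member i and time t, let D be a linear endomorphism of the space of nodal vectors (the damping operator), and let f_ex : ℝ → (Fin n_n → EuclideanSpace ℝ (Fin 3)) be the external nodal force. Then n satisfies the Lagrange equations, i.e., for all t: d/dt [∇T(ṅ(t))] + ∇V_e(n t) + ∇V_g(n t) = f_ex t − D(ṅ t), if and only if for all t: M(n̈ t) + D(ṅ t) + K(n t)(n t) = f_ex t − ĝ, where M is the mass operator (M u) p = Σ_q (M̄ p q) • u q, K(n) is the stiffness operator (K(n) u) p = Σ_i (x i n) * (C i p) • (Σ_q (C i q) • u q), and ĝ is the nodal gravity vector ĝ p = (g/2) * (Σ_i m i * |C| i p) • e₃. -/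
open scoped RealInnerProductSpace
open Matrix

noncomputable section

/-- The Euclidean space of nodal vectors of a structure with `n_n` nodes. -/
abbrev NodalSpace (n_n : ℕ) := PiLp 2 (fun _ : Fin n_n => EuclideanSpace ℝ (Fin 3))

namespace TsgDyn

variable {n_n n_e : ℕ}

/-- Third standard basis vector of `EuclideanSpace ℝ (Fin 3)` (the Z direction). -/
def e₃ : EuclideanSpace ℝ (Fin 3) := EuclideanSpace.single (2 : Fin 3) (1 : ℝ)

/-- Reduced mass matrix `M̄ = (1/6)(|C|ᵀ m̂ |C| + ⌊|C|ᵀ m̂ |C|⌋)`. -/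
def Mbar (C : Matrix (Fin n_e) (Fin n_n) ℝ) (m : Fin n_e → ℝ) :
    Matrix (Fin n_n) (Fin n_n) ℝ :=
  (1/6 : ℝ) • ((C.map abs)ᵀ * Matrix.diagonal m * (C.map abs) +
    Matrix.diagonal fun p => ((C.map abs)ᵀ * Matrix.diagonal m * (C.map abs)) p p)

/-- Kinetic energy `T(v) = (1/2) Σ_{p,q} M̄ p q ⟪v p, v q⟫`. -/
def T (C : Matrix (Fin n_e) (Fin n_n) ℝ) (m : Fin n_e → ℝ) (v : NodalSpace n_n) : ℝ :=
  (1/2) * ∑ p, ∑ q, Mbar C m p q * ⟪v p, v q⟫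

/-- Member length `l i n = ‖Σ_q (C i q) • n q‖`. -/
def len (C : Matrix (Fin n_e) (Fin n_n) ℝ) (i : Fin n_e) (n : NodalSpace n_n) : ℝ :=
  ‖∑ q, C i q • n q‖

/-- Force density `x i n = E i * A i * (1 / l0 i − 1 / (l i n))`. -/
def fd (C : Matrix (Fin n_e) (Fin n_n) ℝ) (A E l0 : Fin n_e → ℝ) (i : Fin n_e)
    (n : NodalSpace n_n) : ℝ :=
  E i * A i * (1 / l0 i - 1 / len C i n)

/-- Strain potential energy `V_e(n) = Σ_i (E i A i / (2 l0 i)) (l i n − l0 i)²`. -/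
def Ve (C : Matrix (Fin n_e) (Fin n_n) ℝ) (A E l0 : Fin n_e → ℝ) (n : NodalSpace n_n) : ℝ :=
  ∑ i, (E i * A i / (2 * l0 i)) * (len C i n - l0 i) ^ 2

/-- Gravitational potential energy `V_g(n) = Σ_i (m i g / 2)(⟪n (j i), e₃⟫ + ⟪n (k i), e₃⟫)`. -/
def Vg (j k : Fin n_e → Fin n_n) (m : Fin n_e → ℝ) (g : ℝ) (n : NodalSpace n_n) : ℝ :=
  ∑ i, (m i * g / 2) * (⟪n (j i), e₃⟫ + ⟪n (k i), e₃⟫)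

/-- Mass operator `(M u) p = Σ_q (M̄ p q) • u q`. -/
def Mop (C : Matrix (Fin n_e) (Fin n_n) ℝ) (m : Fin n_e → ℝ) (u : NodalSpace n_n) :
    NodalSpace n_n :=
  (WithLp.equiv 2 (∀ _ : Fin n_n, EuclideanSpace ℝ (Fin 3))).symm
    fun p => ∑ q, Mbar C m p q • u q

/-- Stiffness operator `(K(n) u) p = Σ_i (x i n)(C i p) • (Σ_q (C i q) • u q)`. -/
def Kop (C : Matrix (Fin n_e) (Fin n_n) ℝ) (A E l0 : Fin n_e → ℝ) (n u : NodalSpace n_n) :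
    NodalSpace n_n :=
  (WithLp.equiv 2 (∀ _ : Fin n_n, EuclideanSpace ℝ (Fin 3))).symm
    fun p => ∑ i, (fd C A E l0 i n * C i p) • (∑ q, C i q • u q)

/-- Nodal gravity vector `ĝ p = (g/2)(Σ_i m i |C i p|) • e₃`. -/
def ghat (C : Matrix (Fin n_e) (Fin n_n) ℝ) (m : Fin n_e → ℝ) (g : ℝ) : NodalSpace n_n :=
  (WithLp.equiv 2 (∀ _ : Fin n_n, EuclideanSpace ℝ (Fin 3))).symm
    fun p => ((g/2) * ∑ i, m i * |C i p|) • e₃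

end TsgDyn

/-!
The two systems agree term by term. Since `M̄` is symmetric, `T(v) = ½⟪v, M v⟫` with `M`
self-adjoint, so `∇T(ṅ) = M ṅ`, whose time derivative is `M n̈`. Writing `B = C ⊗ 1`, so
that `(B n)_i` is the member vector of member `i`, `V_e = Φ ∘ B` with `Φ` a sum of functions
of the separate member vectors; the chain rule gives `∇V_e(n) = Bᵀ ∇Φ(B n)`. The derivative
`2 c_i (l_i − l0_i) / l_i` of the term `c_i (l_i − l0_i)²`, `c_i = E_i A_i / (2 l0_i)`, along
its member vector is the force density `x_i`, so this is `K(n) n`. Finally `V_g = ⟪ĝ, ·⟫`,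
as each member's weight is split evenly between its two end nodes.
-/

section Gradient

variable {E F : Type*} [NormedAddCommGroup E] [InnerProductSpace ℝ E] [CompleteSpace E]
  [NormedAddCommGroup F] [InnerProductSpace ℝ F] [CompleteSpace F]

theorem HasFDerivAt.hasGradientAt_of_apply_eq_inner {f : E → ℝ} {φ : E →L[ℝ] ℝ} {g x : E}
    (hf : HasFDerivAt f φ x) (hφ : ∀ h, φ h = ⟪g, h⟫) : HasGradientAt f g x :=
  hasGradientAt_iff_hasFDerivAt.2 <| hf.congr_fderiv <| ContinuousLinearMap.ext fun h => by
    simp [hφ]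

theorem hasGradientAt_inner_const (a x : E) : HasGradientAt (fun y => ⟪a, y⟫) a x :=
  (innerSL ℝ a).hasFDerivAt.hasGradientAt_of_apply_eq_inner fun _ => rfl

theorem HasDerivAt.comp_hasGradientAt {φ : ℝ → ℝ} {φ' : ℝ} {f : E → ℝ} {g x : E}
    (hφ : HasDerivAt φ φ' (f x)) (hf : HasGradientAt f g x) :
    HasGradientAt (φ ∘ f) (φ' • g) x :=
  (hφ.comp_hasFDerivAt x hf.hasFDerivAt).hasGradientAt_of_apply_eq_inner fun h => by
    simp [real_inner_smul_left]

theorem HasGradientAt.comp_continuousLinearMap {f : F → ℝ} {g : F} {x : E} (B : E →L[ℝ] F)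
    (hf : HasGradientAt f g (B x)) :
    HasGradientAt (f ∘ B) (ContinuousLinearMap.adjoint B g) x :=
  (hf.hasFDerivAt.comp x B.hasFDerivAt).hasGradientAt_of_apply_eq_inner fun h => by
    simp [ContinuousLinearMap.adjoint_inner_left]

theorem hasGradientAt_norm {x : E} (hx : x ≠ 0) : HasGradientAt (‖·‖) (‖x‖⁻¹ • x) x := by
  have hsq : HasGradientAt (‖·‖ ^ 2) ((2 : ℝ) • x) x :=
    (hasStrictFDerivAt_norm_sq x).hasFDerivAt.hasGradientAt_of_apply_eq_inner fun h => by
      simp [real_inner_smul_left]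
  have hsqrt := (Real.hasDerivAt_sqrt (by positivity : ‖x‖ ^ 2 ≠ 0)).comp_hasGradientAt
    (f := (‖·‖ ^ 2)) hsq
  convert hsqrt using 1
  · ext y; simp
  · simp [smul_smul]

theorem hasGradientAt_half_inner_self_apply {L : E →L[ℝ] E} (hL : IsSelfAdjoint L) (x : E) :
    HasGradientAt (fun y => 1 / 2 * ⟪y, L y⟫) (L x) x :=
  (((hasFDerivAt_id x).inner ℝ L.hasFDerivAt).const_mul _).hasGradientAt_of_apply_eq_inner
    fun h => by
      simp only [_root_.smul_apply, ContinuousLinearMap.comp_apply,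
        ContinuousLinearMap.prod_apply, fderivInnerCLM_apply, ContinuousLinearMap.id_apply, id,
        smul_eq_mul]
      rw [← ContinuousLinearMap.adjoint_inner_left, hL.adjoint_eq, real_inner_comm h]
      ring

theorem hasGradientAt_piLp_sum {ι : Type*} [Fintype ι] {β : ι → Type*}
    [∀ i, NormedAddCommGroup (β i)] [∀ i, InnerProductSpace ℝ (β i)] [∀ i, CompleteSpace (β i)]
    {f : ∀ i, β i → ℝ} {g : ∀ i, β i} {y : PiLp 2 β}
    (hf : ∀ i, HasGradientAt (f i) (g i) (y i)) :
    HasGradientAt (fun z : PiLp 2 β => ∑ i, f i (z i)) (WithLp.toLp 2 g) y :=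
  (HasFDerivAt.fun_sum fun i _ => (hf i).hasFDerivAt.comp y (PiLp.proj 2 β i).hasFDerivAt)
    |>.hasGradientAt_of_apply_eq_inner fun h => by simp [PiLp.inner_apply]

end Gradient

namespace Matrix

variable {F : Type*} [NormedAddCommGroup F] [InnerProductSpace ℝ F] {ι κ : Type*} [Fintype κ]

/-- The operator `C ⊗ 1_F` on `F`-valued vectors indexed by the columns of `C`. -/
def kronIdCLM (C : Matrix ι κ ℝ) : PiLp 2 (fun _ : κ => F) →L[ℝ] PiLp 2 (fun _ : ι => F) :=
  (PiLp.continuousLinearEquiv 2 ℝ _).symm.toContinuousLinearMap.comp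
    (ContinuousLinearMap.pi fun i => ∑ q, C i q • PiLp.proj 2 (fun _ : κ => F) q)

@[simp]
theorem kronIdCLM_apply (C : Matrix ι κ ℝ) (u : PiLp 2 (fun _ : κ => F)) (i : ι) :
    C.kronIdCLM u i = ∑ q, C i q • u q := by
  simp [kronIdCLM]

theorem adjoint_kronIdCLM [Fintype ι] [CompleteSpace F] (C : Matrix ι κ ℝ) :
    ContinuousLinearMap.adjoint (C.kronIdCLM (F := F)) = Cᵀ.kronIdCLM := by
  refine ((ContinuousLinearMap.eq_adjoint_iff _ _).2 fun x y => ?_).symm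
  simp only [PiLp.inner_apply, kronIdCLM_apply, sum_inner, inner_sum, real_inner_smul_left,
    real_inner_smul_right, transpose_apply]
  exact Finset.sum_comm

theorem IsSymm.isSelfAdjoint_kronIdCLM [Fintype ι] [CompleteSpace F] {M : Matrix ι ι ℝ}
    (hM : M.IsSymm) : IsSelfAdjoint (M.kronIdCLM (F := F)) := by
  rw [ContinuousLinearMap.isSelfAdjoint_iff', adjoint_kronIdCLM, hM.eq]

end Matrix

namespace TsgDyn

open Finset

variable {n_n n_e : ℕ}

section

variable (j k : Fin n_e → Fin n_n) (C : Matrix (Fin n_e) (Fin n_n) ℝ) (A E l0 m : Fin n_e → ℝ)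
  (g : ℝ)

theorem Mbar_isSymm : (Mbar C m).IsSymm := by
  simp [Mbar, Matrix.IsSymm, Matrix.transpose_mul, Matrix.mul_assoc]

theorem Mop_eq_kronIdCLM : Mop C m = (Mbar C m).kronIdCLM := by
  ext u p : 2
  simp [Mop]

theorem hasGradientAt_T (v : NodalSpace n_n) : HasGradientAt (T C m) (Mop C m v) v := by
  have hT : T C m = fun w => 1 / 2 * ⟪w, (Mbar C m).kronIdCLM w⟫ := by
    ext w
    rw [T, PiLp.inner_apply]
    simp only [Matrix.kronIdCLM_apply, inner_sum, real_inner_smul_right, mul_sum]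
  rw [hT, Mop_eq_kronIdCLM]
  exact hasGradientAt_half_inner_self_apply (Mbar_isSymm C m).isSelfAdjoint_kronIdCLM v

theorem len_eq_norm_kronIdCLM (i : Fin n_e) (n : NodalSpace n_n) :
    len C i n = ‖C.kronIdCLM n i‖ := by
  simp [len]

theorem Kop_self_eq_transpose_kronIdCLM (n : NodalSpace n_n) :
    Kop C A E l0 n n =
      Cᵀ.kronIdCLM (WithLp.toLp 2 fun i => fd C A E l0 i n • C.kronIdCLM n i) := by
  ext p : 1
  simp only [Kop, WithLp.equiv_symm_apply, PiLp.toLp_apply, Matrix.kronIdCLM_apply,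
    Matrix.transpose_apply]
  exact sum_congr rfl fun i _ => by rw [mul_comm, mul_smul]

theorem hasGradientAt_Ve (hl0 : ∀ i, l0 i ≠ 0) (n : NodalSpace n_n) (hlen : ∀ i, len C i n ≠ 0) :
    HasGradientAt (Ve C A E l0) (Kop C A E l0 n n) n := by
  set c : Fin n_e → ℝ := fun i => E i * A i / (2 * l0 i)
  have hVe : Ve C A E l0 = (fun y => ∑ i, c i * (‖y i‖ - l0 i) ^ 2) ∘ C.kronIdCLM := by
    ext w
    simp [Ve, c, len_eq_norm_kronIdCLM]
  rw [hVe, Kop_self_eq_transpose_kronIdCLM, ← Matrix.adjoint_kronIdCLM]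
  refine HasGradientAt.comp_continuousLinearMap _
    (hasGradientAt_piLp_sum (f := fun i y => c i * (‖y‖ - l0 i) ^ 2) fun i => ?_)
  have hi : C.kronIdCLM n i ≠ 0 := by
    simpa [len_eq_norm_kronIdCLM] using hlen i
  have hφ : HasDerivAt (fun r => c i * (r - l0 i) ^ 2) (c i * (2 * (‖C.kronIdCLM n i‖ - l0 i)))
      ‖C.kronIdCLM n i‖ := by
    simpa using ((hasDerivAt_id _).sub_const (l0 i)).pow 2 |>.const_mul (c i)
  convert hφ.comp_hasGradientAt (hasGradientAt_norm hi) using 1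
  · rfl
  rw [smul_smul, fd, len_eq_norm_kronIdCLM]
  congr 1
  simp only [c]
  field_simp [hl0 i]

variable {j k C}

theorem abs_C_eq_ite (hjk : ∀ i, j i ≠ k i)
    (hC : ∀ i p, C i p = if p = k i then 1 else if p = j i then -1 else 0) (i : Fin n_e)
    (p : Fin n_n) : |C i p| = (if p = j i then 1 else 0) + (if p = k i then 1 else 0) := by
  rw [hC]
  split_ifs <;> simp_all

theorem Vg_eq_inner_ghat (hjk : ∀ i, j i ≠ k i)
    (hC : ∀ i p, C i p = if p = k i then 1 else if p = j i then -1 else 0)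
    (v : NodalSpace n_n) : Vg j k m g v = ⟪ghat C m g, v⟫ := by
  have hsum : ∀ i, ∑ p, |C i p| * ⟪v p, e₃⟫ = ⟪v (j i), e₃⟫ + ⟪v (k i), e₃⟫ := fun i => by
    simp [abs_C_eq_ite hjk hC, add_mul, sum_add_distrib]
  rw [Vg, PiLp.inner_apply]
  simp only [ghat, WithLp.equiv_symm_apply, PiLp.toLp_apply, real_inner_smul_left, mul_sum,
    sum_mul]
  rw [sum_comm]
  refine sum_congr rfl fun i _ => ?_
  rw [← hsum, mul_sum]
  refine sum_congr rfl fun p _ => ?_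
  rw [real_inner_comm]
  ring

theorem hasGradientAt_Vg (hjk : ∀ i, j i ≠ k i)
    (hC : ∀ i p, C i p = if p = k i then 1 else if p = j i then -1 else 0)
    (v : NodalSpace n_n) : HasGradientAt (Vg j k m g) (ghat C m g) v := by
  rw [show Vg j k m g = fun w => ⟪ghat C m g, w⟫ from funext (Vg_eq_inner_ghat m g hjk hC)]
  exact hasGradientAt_inner_const _ v

end

theorem lagrange_iff_fem_dynamics_general
    (j k : Fin n_e → Fin n_n) (hjk : ∀ i, j i ≠ k i)
    (C : Matrix (Fin n_e) (Fin n_n) ℝ)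
    (hC : ∀ i p, C i p = if p = k i then 1 else if p = j i then -1 else 0)
    (A E l0 m : Fin n_e → ℝ)
    (hl0 : ∀ i, 0 < l0 i)
    (g : ℝ)
    (n : ℝ → NodalSpace n_n)
    (hn' : ∀ t, DifferentiableAt ℝ (deriv n) t)
    (hlen : ∀ i t, len C i (n t) ≠ 0)
    (D : NodalSpace n_n →ₗ[ℝ] NodalSpace n_n)
    (f_ex : ℝ → NodalSpace n_n) :
    (∀ t, deriv (fun s => gradient (T C m) (deriv n s)) t
        + gradient (Ve C A E l0) (n t) + gradient (Vg j k m g) (n t)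
        = f_ex t - D (deriv n t)) ↔
      (∀ t, Mop C m (deriv (deriv n) t) + D (deriv n t) + Kop C A E l0 (n t) (n t)
        = f_ex t - ghat C m g) := by
  have hT : ∀ t, deriv (fun s => gradient (T C m) (deriv n s)) t
      = Mop C m (deriv (deriv n) t) := fun t => by
    rw [gradient_eq (hasGradientAt_T C m), Mop_eq_kronIdCLM]
    exact ((Mbar C m).kronIdCLM.hasFDerivAt.comp_hasDerivAt t (hn' t).hasDerivAt).deriv
  have hVe : ∀ t, gradient (Ve C A E l0) (n t) = Kop C A E l0 (n t) (n t) := fun t =>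
    (hasGradientAt_Ve C A E l0 (fun i => (hl0 i).ne') (n t) (hlen · t)).gradient
  have hVg : ∀ t, gradient (Vg j k m g) (n t) = ghat C m g := fun t =>
    (hasGradientAt_Vg m g hjk hC (n t)).gradient
  refine forall_congr' fun t => ?_
  rw [hT, hVe, hVg]
  constructor <;> intro h <;> linear_combination (norm := module) h

/-- **Theorem 1 (nonlinear tensegrity dynamics).** A twice-differentiable nodal trajectory
satisfies the Lagrange equations `d/dt[∇T(ṅ)] + ∇V_e(n) + ∇V_g(n) = f_ex − D ṅ` if and only
if it satisfies the finite element dynamics `M n̈ + D ṅ + K(n) n = f_ex − ĝ`. -/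
theorem lagrange_iff_fem_dynamics
    (j k : Fin n_e → Fin n_n) (hjk : ∀ i, j i ≠ k i)
    (C : Matrix (Fin n_e) (Fin n_n) ℝ)
    (hC : ∀ i p, C i p = if p = k i then 1 else if p = j i then -1 else 0)
    (A E l0 m : Fin n_e → ℝ)
    (hA : ∀ i, 0 < A i) (hE : ∀ i, 0 < E i) (hl0 : ∀ i, 0 < l0 i) (hm : ∀ i, 0 ≤ m i)
    (g : ℝ) (hg : 0 ≤ g)
    (n : ℝ → NodalSpace n_n)
    (hn : ∀ t, DifferentiableAt ℝ n t)
    (hn' : ∀ t, DifferentiableAt ℝ (deriv n) t)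
    (hlen : ∀ i t, len C i (n t) ≠ 0)
    (D : NodalSpace n_n →ₗ[ℝ] NodalSpace n_n)
    (f_ex : ℝ → NodalSpace n_n) :
    (∀ t, deriv (fun s => gradient (T C m) (deriv n s)) t
        + gradient (Ve C A E l0) (n t) + gradient (Vg j k m g) (n t)
        = f_ex t - D (deriv n t)) ↔
      (∀ t, Mop C m (deriv (deriv n) t) + D (deriv n t) + Kop C A E l0 (n t) (n t)
        = f_ex t - ghat C m g) :=
  lagrange_iff_fem_dynamics_general j k hjk C hC A E l0 m hl0 g n hn' hlen D f_ex

end TsgDyn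

end
end

section
/- Let n be a nodal configuration with l i n ≠ 0 for every member i. Then the force-density map x : (Fin n_n → EuclideanSpace ℝ (Fin 3)) → EuclideanSpace ℝ (Fin n_e), (x n) i = E i * A i * (1 / l0 i − 1 / (l i n)), is differentiable at n, and its Fréchet derivative is the linear map δn ↦ (fun i => E i * A i * (l i n)⁻³ * ⟪h i n, Σ_q (C i q) • δn q⟫); in matrix form, ∂x/∂n = A₁ l̂⁻³ Â Ê. -/
open scoped RealInnerProductSpace
open Matrix

noncomputable section

/-!
Each component of the force-density map is `E A (1 / l0 - ‖h‖⁻¹)` composed with the linear map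
`n ↦ h i n = Σ_q C i q • n q`. Away from `0`, `‖·‖ = √‖·‖²` has derivative `‖h‖⁻¹ ⟪h, ·⟫`, so
`‖·‖⁻¹` has derivative `-‖h‖⁻³ ⟪h, ·⟫`; the chain rule and differentiating the Euclidean-valued map
componentwise give the formula.
-/

section MemberForceDensity

variable {F : Type*} [NormedAddCommGroup F] [InnerProductSpace ℝ F]

theorem hasFDerivAt_norm_of_ne_zero {x : F} (hx : x ≠ 0) :
    HasFDerivAt (fun y : F => ‖y‖) (‖x‖⁻¹ • innerSL ℝ x) x := by
  have h := (hasStrictFDerivAt_norm_sq x).hasFDerivAt.sqrt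
    (pow_ne_zero 2 (norm_ne_zero_iff.2 hx))
  simp only [Real.sqrt_sq (norm_nonneg _)] at h
  refine h.congr_fderiv ?_
  ext v
  simp
  ring

theorem hasFDerivAt_inv_norm {x : F} (hx : x ≠ 0) :
    HasFDerivAt (fun y : F => ‖y‖⁻¹) (-(‖x‖ ^ 3)⁻¹ • innerSL ℝ x) x := by
  refine ((hasDerivAt_inv (norm_ne_zero_iff.2 hx)).comp_hasFDerivAt x
    (hasFDerivAt_norm_of_ne_zero hx)).congr_fderiv ?_
  ext v
  simp
  ring

def memberForceDensity (EA l0 : ℝ) (h : F) : ℝ :=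
  EA * (1 / l0 - 1 / ‖h‖)

theorem hasFDerivAt_memberForceDensity (EA l0 : ℝ) {h : F} (hh : h ≠ 0) :
    HasFDerivAt (memberForceDensity EA l0) ((EA * (‖h‖ ^ 3)⁻¹) • innerSL ℝ h) h := by
  have hd := ((hasFDerivAt_const (1 / l0) h).sub (hasFDerivAt_inv_norm hh)).const_mul EA
  refine (hd.congr_fderiv ?_).congr_of_eventuallyEq (.of_forall fun y => ?_)
  · ext v
    simp [mul_assoc]
  · simp [memberForceDensity]

end MemberForceDensity

section PiLp

variable {𝕜 ι H : Type*} [NontriviallyNormedField 𝕜] [Fintype ι]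
  [NormedAddCommGroup H] [NormedSpace 𝕜 H] (p : ENNReal)

def PiLp.weightedSumCLM {E : Type*} [NormedAddCommGroup E] [NormedSpace 𝕜 E] (c : ι → 𝕜) :
    PiLp p (fun _ : ι => E) →L[𝕜] E :=
  ∑ q, c q • PiLp.proj p (fun _ => E) q

@[simp]
theorem PiLp.weightedSumCLM_apply {E : Type*} [NormedAddCommGroup E] [NormedSpace 𝕜 E]
    (c : ι → 𝕜) (m : PiLp p (fun _ : ι => E)) :
    PiLp.weightedSumCLM p c m = ∑ q, c q • m q := by
  simp [PiLp.weightedSumCLM]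

variable [Fact (1 ≤ p)] {E : ι → Type*} [∀ i, NormedAddCommGroup (E i)] [∀ i, NormedSpace 𝕜 (E i)]
  {f : ∀ i, H → E i} {D : ∀ i, H →L[𝕜] E i} {x : H}

theorem hasFDerivAt_toLp_pi (hf : ∀ i, HasFDerivAt (f i) (D i) x) :
    HasFDerivAt (fun y => WithLp.toLp p (fun i => f i y))
      ((PiLp.continuousLinearEquiv p 𝕜 E).symm.toContinuousLinearMap ∘L
        ContinuousLinearMap.pi D) x :=
  (PiLp.hasFDerivAt_toLp p _).comp x (hasFDerivAt_pi.2 hf)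

theorem fderiv_toLp_pi_apply (hf : ∀ i, HasFDerivAt (f i) (D i) x) (v : H) (i : ι) :
    fderiv 𝕜 (fun y => WithLp.toLp p (fun i => f i y)) x v i = D i v := by
  rw [(hasFDerivAt_toLp_pi p hf).fderiv]
  rfl

end PiLp

theorem force_density_fderiv_general {n_n n_e : ℕ}
    (C : Matrix (Fin n_e) (Fin n_n) ℝ)
    (A E l0 : Fin n_e → ℝ)
    (n : NodalSpace n_n)
    (hl : ∀ i, ‖∑ q, C i q • n q‖ ≠ 0) :
    DifferentiableAt ℝ
      (fun n' : NodalSpace n_n =>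
        ((WithLp.equiv 2 (∀ _ : Fin n_e, ℝ)).symm
          (fun i => E i * A i * (1 / l0 i - 1 / ‖∑ q, C i q • n' q‖)) :
          EuclideanSpace ℝ (Fin n_e))) n ∧
    ∀ (δn : NodalSpace n_n) (i : Fin n_e),
      fderiv ℝ
        (fun n' : NodalSpace n_n =>
          ((WithLp.equiv 2 (∀ _ : Fin n_e, ℝ)).symm
            (fun i => E i * A i * (1 / l0 i - 1 / ‖∑ q, C i q • n' q‖)) :
            EuclideanSpace ℝ (Fin n_e))) n δn i =
        E i * A i * (‖∑ q, C i q • n q‖ ^ 3)⁻¹ * ⟪∑ q, C i q • n q, ∑ q, C i q • δn q⟫ := by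
  have hcomponent : ∀ i, HasFDerivAt
      (fun n' : NodalSpace n_n => E i * A i * (1 / l0 i - 1 / ‖∑ q, C i q • n' q‖))
      ((E i * A i * (‖∑ q, C i q • n q‖ ^ 3)⁻¹) •
        (innerSL ℝ (∑ q, C i q • n q)).comp (PiLp.weightedSumCLM 2 (C i))) n := fun i => by
    have hi := (hasFDerivAt_memberForceDensity (E i * A i) (l0 i)
      (h := PiLp.weightedSumCLM 2 (C i) n) (by simpa using hl i)).comp n
      (PiLp.weightedSumCLM 2 (C i)).hasFDerivAt
    simpa [memberForceDensity, Function.comp_def] using hi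
  rw [WithLp.equiv_symm_apply]
  refine ⟨(hasFDerivAt_toLp_pi 2 hcomponent).differentiableAt, fun δn i => ?_⟩
  rw [fderiv_toLp_pi_apply 2 hcomponent]
  simp only [_root_.smul_apply, ContinuousLinearMap.comp_apply, innerSL_apply_apply,
    PiLp.weightedSumCLM_apply, smul_eq_mul]

/-- The force-density map `x : n ↦ (i ↦ E i * A i * (1 / l0 i − 1 / l i n))` is
differentiable at any configuration with all member lengths nonzero, and its Fréchet
derivative is `δn ↦ (i ↦ E i * A i * (l i n)⁻³ * ⟪h i n, Σ_q (C i q) • δn q⟫)`;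
in matrix form, `∂x/∂n = A₁ l̂⁻³ Â Ê`. -/
theorem force_density_fderiv {n_n n_e : ℕ}
    (j k : Fin n_e → Fin n_n) (hjk : ∀ i, j i ≠ k i)
    (C : Matrix (Fin n_e) (Fin n_n) ℝ)
    (hC : ∀ i p, C i p = if p = k i then 1 else if p = j i then -1 else 0)
    (A E l0 : Fin n_e → ℝ)
    (hA : ∀ i, 0 < A i) (hE : ∀ i, 0 < E i) (hl0 : ∀ i, 0 < l0 i)
    (n : NodalSpace n_n)
    (hl : ∀ i, ‖∑ q, C i q • n q‖ ≠ 0) :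
    DifferentiableAt ℝ
      (fun n' : NodalSpace n_n =>
        ((WithLp.equiv 2 (∀ _ : Fin n_e, ℝ)).symm
          (fun i => E i * A i * (1 / l0 i - 1 / ‖∑ q, C i q • n' q‖)) :
          EuclideanSpace ℝ (Fin n_e))) n ∧
    ∀ (δn : NodalSpace n_n) (i : Fin n_e),
      fderiv ℝ
        (fun n' : NodalSpace n_n =>
          ((WithLp.equiv 2 (∀ _ : Fin n_e, ℝ)).symm
            (fun i => E i * A i * (1 / l0 i - 1 / ‖∑ q, C i q • n' q‖)) :
            EuclideanSpace ℝ (Fin n_e))) n δn i =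
        E i * A i * (‖∑ q, C i q • n q‖ ^ 3)⁻¹ * ⟪∑ q, C i q • n q, ∑ q, C i q • δn q⟫ :=
  force_density_fderiv_general C A E l0 n hl

end
end
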